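/- Let G be a finite abelian group of order n, D(G) its generalized dihedral group (assumed non-abelian), \Gamma the commuting graph of D(G), and z = |{g \in G : g^2 = e}|. Then the degree of a vertex v in \Gamma is: 2n - 1 if v = (g, 1) with g^2 = e (i.e., v \in Z(D(G))); n - 1 if v = (g, 1) with g^2 \ne e; and 2z - 1 if v = (g, -1). -/

import Mathlib

/-- The generalized dihedral group `D(G) = G ⋊ C₂`, with `⟨g, false⟩`
representing `(g, 1)` and `⟨g, true⟩` representing `(g, -1)`.
Multiplication is `(g₁, c₁)(g₂, c₂) = (g₁ g₂^{c₁}, c₁ c₂)`, i.e. `-1` acts by inversion. -/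
@[ext]
structure GenDihedral (G : Type) where
  g : G
  b : Bool
  deriving DecidableEq

namespace GenDihedral

variable {G : Type} [CommGroup G]

instance : Mul (GenDihedral G) :=
  ⟨fun a c => ⟨a.g * (if a.b then c.g⁻¹ else c.g), xor a.b c.b⟩⟩

instance : One (GenDihedral G) := ⟨⟨1, false⟩⟩

instance : Inv (GenDihedral G) := ⟨fun a => ⟨if a.b then a.g else a.g⁻¹, a.b⟩⟩

theorem mul_def (a c : GenDihedral G) :
    a * c = ⟨a.g * (if a.b then c.g⁻¹ else c.g), xor a.b c.b⟩ := rfl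

theorem one_def : (1 : GenDihedral G) = ⟨1, false⟩ := rfl

theorem inv_def (a : GenDihedral G) : a⁻¹ = ⟨if a.b then a.g else a.g⁻¹, a.b⟩ := rfl

instance : Group (GenDihedral G) where
  mul_assoc a c d := by
    obtain ⟨g₁, b₁⟩ := a; obtain ⟨g₂, b₂⟩ := c; obtain ⟨g₃, b₃⟩ := d
    cases b₁ <;> cases b₂ <;> cases b₃ <;>
      simp [mul_def, mul_assoc, mul_comm, mul_left_comm, mul_inv, inv_inv]
  one_mul a := by obtain ⟨g, b⟩ := a; cases b <;> simp [mul_def, one_def]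
  mul_one a := by obtain ⟨g, b⟩ := a; cases b <;> simp [mul_def, one_def]
  inv_mul_cancel a := by
    obtain ⟨g, b⟩ := a; cases b <;> simp [mul_def, one_def, inv_def]

instance [Fintype G] : Fintype (GenDihedral G) :=
  Fintype.ofEquiv (G × Bool)
    ⟨fun p => ⟨p.1, p.2⟩, fun x => (x.g, x.b), fun _ => rfl, fun _ => rfl⟩

instance [DecidableEq G] (a c : GenDihedral G) : Decidable (Commute a c) :=
  decidable_of_iff (a * c = c * a) Iff.rfl

end GenDihedral

namespace GenDihedral

/-- The commuting graph of `D(G)`: vertices are the elements of `D(G)`, and two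
distinct vertices are adjacent iff they commute. -/
def commGraph (G : Type) [CommGroup G] : SimpleGraph (GenDihedral G) where
  Adj u v := u ≠ v ∧ u * v = v * u
  symm := ⟨fun _ _ h => ⟨h.1.symm, h.2.symm⟩⟩
  loopless := ⟨fun _ h => h.1 rfl⟩

instance {G : Type} [CommGroup G] [DecidableEq G] : DecidableRel (commGraph G).Adj :=
  fun u v => inferInstanceAs (Decidable (u ≠ v ∧ u * v = v * u))

end GenDihedral


/-!
The degree of `v` is `|C(v)| - 1`, where `C(v)` is the centralizer of `v` in `D(G)`.
Since `(a, 1)(c, -1) = (ac, -1)` and `(c, -1)(a, 1) = (ca⁻¹, -1)`, the centralizer of `(a, 1)`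
is `G × {1}`, together with all of `G × {-1}` exactly when `a² = e`. The centralizer of
`(a, -1)` consists of the `(c, 1)` with `c² = e` and the `(c, -1)` with `c² = a²`; the latter
form a coset of the `2`-torsion subgroup, so both parts have `z` elements.
-/

open Finset

theorem card_filter_sq_eq_sq {G : Type} [CommGroup G] [Fintype G] [DecidableEq G] (a : G) :
    #{c : G | c ^ 2 = a ^ 2} = #{c : G | c ^ 2 = 1} := by
  apply card_nbij' (· * a⁻¹) (· * a) <;> intro c <;> simp +contextual [mul_pow]

namespace GenDihedral

variable {G : Type}

theorem card_filter_eq_add [Fintype G] (P : GenDihedral G → Prop) [DecidablePred P] :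
    #{u | P u} = #{c | P ⟨c, false⟩} + #{c | P ⟨c, true⟩} := by
  let e : GenDihedral G ≃ G × Bool :=
    ⟨fun u => (u.g, u.b), fun p => ⟨p.1, p.2⟩, fun _ => rfl, fun _ => rfl⟩
  simp only [card_filter]
  rw [Fintype.sum_equiv e (fun u => if P u then 1 else 0)
      (fun p => if P ⟨p.1, p.2⟩ then 1 else 0) (fun _ => rfl),
    Fintype.sum_prod_type_right, Fintype.sum_bool, add_comm]

variable [CommGroup G]

@[simp]
theorem mk_mul_mk (a c : G) (b d : Bool) :
    (⟨a, b⟩ : GenDihedral G) * ⟨c, d⟩ = ⟨a * (if b then c⁻¹ else c), xor b d⟩ := rfl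

@[simp]
theorem commute_mk_false_mk_false (a c : G) :
    Commute (⟨a, false⟩ : GenDihedral G) ⟨c, false⟩ := by
  simp [Commute, SemiconjBy, mul_comm]

@[simp]
theorem commute_mk_false_mk_true_iff {a c : G} :
    Commute (⟨a, false⟩ : GenDihedral G) ⟨c, true⟩ ↔ a ^ 2 = 1 := by
  simp [Commute, SemiconjBy, GenDihedral.ext_iff, mul_comm c, eq_inv_iff_mul_eq_one, sq]

@[simp]
theorem commute_mk_true_mk_false_iff {a c : G} :
    Commute (⟨a, true⟩ : GenDihedral G) ⟨c, false⟩ ↔ c ^ 2 = 1 := by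
  simp [Commute, SemiconjBy, GenDihedral.ext_iff, mul_comm c, inv_eq_iff_mul_eq_one, sq]

@[simp]
theorem commute_mk_true_mk_true_iff {a c : G} :
    Commute (⟨a, true⟩ : GenDihedral G) ⟨c, true⟩ ↔ c ^ 2 = a ^ 2 := by
  simp only [Commute, SemiconjBy, mk_mul_mk, if_true, GenDihedral.ext_iff, ← div_eq_mul_inv,
    div_eq_div_iff_mul_eq_mul, sq, eq_comm (a := a * a), Bool.xor_self, and_true]

theorem commGraph_adj {u v : GenDihedral G} : (commGraph G).Adj u v ↔ u ≠ v ∧ Commute u v :=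
  Iff.rfl

variable [Fintype G] [DecidableEq G]

theorem degree_commGraph (v : GenDihedral G) :
    (commGraph G).degree v = #{u | Commute v u} - 1 := by
  have : (commGraph G).neighborFinset v = ({u | Commute v u} : Finset _).erase v := by
    ext u
    simp [commGraph_adj, and_comm, ne_comm]
  rw [← SimpleGraph.card_neighborFinset_eq_degree, this, card_erase_of_mem (by simp)]

theorem degree_commGraph_mk_false_of_sq_eq_one {a : G} (ha : a ^ 2 = 1) :
    (commGraph G).degree ⟨a, false⟩ = 2 * Fintype.card G - 1 := by
  simp [degree_commGraph, card_filter_eq_add, ha, two_mul]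

theorem degree_commGraph_mk_false_of_sq_ne_one {a : G} (ha : a ^ 2 ≠ 1) :
    (commGraph G).degree ⟨a, false⟩ = Fintype.card G - 1 := by
  simp [degree_commGraph, card_filter_eq_add, ha]

theorem degree_commGraph_mk_true (a : G) :
    (commGraph G).degree ⟨a, true⟩ = 2 * #{c : G | c ^ 2 = 1} - 1 := by
  simp [degree_commGraph, card_filter_eq_add, card_filter_sq_eq_sq, two_mul]

end GenDihedral

open GenDihedral in
theorem stmt7_general {G : Type} [CommGroup G] [Fintype G] [DecidableEq G]
    (n z : ℕ) (hn : n = Fintype.card G)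
    (hz : z = (Finset.univ.filter fun g : G => g ^ 2 = 1).card)
    (v : GenDihedral G) :
    (commGraph G).degree v =
      if v.b = false then (if v.g ^ 2 = 1 then 2 * n - 1 else n - 1) else 2 * z - 1 := by
  obtain ⟨a, _ | _⟩ := v
  · by_cases ha : a ^ 2 = 1
    · simp [degree_commGraph_mk_false_of_sq_eq_one ha, ha, hn]
    · simp [degree_commGraph_mk_false_of_sq_ne_one ha, ha, hn]
  · simp [degree_commGraph_mk_true, hz]

open GenDihedral in
/-- Degrees in the commuting graph of a non-abelian `D(G)` of order `2n` with
`z = |{g : g² = e}|`: a central vertex `(g,1)` (with `g² = e`) has degree `2n - 1`,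
a vertex `(g,1)` with `g² ≠ e` has degree `n - 1`, and a vertex `(g,-1)` has degree
`2z - 1`. -/
theorem stmt7 {G : Type} [CommGroup G] [Fintype G] [DecidableEq G]
    (hna : ∃ g : G, g ^ 2 ≠ 1) (n z : ℕ) (hn : n = Fintype.card G)
    (hz : z = (Finset.univ.filter fun g : G => g ^ 2 = 1).card)
    (v : GenDihedral G) :
    (commGraph G).degree v =
      if v.b = false then (if v.g ^ 2 = 1 then 2 * n - 1 else n - 1) else 2 * z - 1 :=
  stmt7_general n z hn hz v
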